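/- arXiv:2212.02360 — 2 statements merged into one kernel-verified Lean document; each statement's English description precedes it below -/
import Mathlib

section
/- For the free doubly-extended planar Carroll particle, the variational equations x^k' + θ ε^{kl} p_l' = 0 and p_i' - κ_mag ε_{ij} x^j' = 0 imply the conservation of the guiding center Q^k = x^k + θ ε^{kl} p_l and of the impulsion π_i = p_i - κ_mag ε_{ij} x^j; moreover, combining them gives m* x' = 0 and m* p' = 0 with effective mass factor (1 - θ κ_mag), so if θ κ_mag ≠ 1 the particle does not move. -/
private lemma const_of_deriv_zero (f : ℝ → ℝ) (h : ∀ s, HasDerivAt f 0 s) :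
    ∀ s, f s = f 0 := by
  intro s
  exact is_const_of_deriv_eq_zero (fun t => (h t).differentiableAt)
    (fun t => (h t).deriv) s 0

/-- Free doubly-extended planar Carroll particle: the variational equations
`x^k' + θ ε^{kl} p_l' = 0` and `p_i' - κ_mag ε_{ij} x^j' = 0` imply conservation
of the guiding center `Q = x + θ ε p` and of the impulsion `π = p - κ_mag ε x`,
and give `(1 - θ κ_mag) x' = 0`, `(1 - θ κ_mag) p' = 0`; hence if
`θ κ_mag ≠ 1` the particle does not move. -/
theorem doubly_extended_carroll_free {θ κ : ℝ}
    (x p : ℝ → (Fin 2 → ℝ)) (dx dp : ℝ → (Fin 2 → ℝ))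
    (hx : ∀ s i, HasDerivAt (fun t => x t i) (dx s i) s)
    (hp : ∀ s i, HasDerivAt (fun t => p t i) (dp s i) s)
    (heq1 : ∀ s, dx s 0 + θ * dp s 1 = 0)
    (heq2 : ∀ s, dx s 1 - θ * dp s 0 = 0)
    (heq3 : ∀ s, dp s 0 - κ * dx s 1 = 0)
    (heq4 : ∀ s, dp s 1 + κ * dx s 0 = 0) :
    (∀ s, x s 0 + θ * p s 1 = x 0 0 + θ * p 0 1) ∧
    (∀ s, x s 1 - θ * p s 0 = x 0 1 - θ * p 0 0) ∧
    (∀ s, p s 0 - κ * x s 1 = p 0 0 - κ * x 0 1) ∧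
    (∀ s, p s 1 + κ * x s 0 = p 0 1 + κ * x 0 0) ∧
    (∀ s i, (1 - θ * κ) * dx s i = 0) ∧
    (∀ s i, (1 - θ * κ) * dp s i = 0) ∧
    (θ * κ ≠ 1 → (∀ s, x s = x 0) ∧ (∀ s, p s = p 0)) := by
  have hQ1 : ∀ s, x s 0 + θ * p s 1 = x 0 0 + θ * p 0 1 := by
    apply const_of_deriv_zero
    intro s
    have := ((hx s 0).add ((hp s 1).const_mul θ))
    simpa [heq1 s, Pi.add_def] using this
  have hQ2 : ∀ s, x s 1 - θ * p s 0 = x 0 1 - θ * p 0 0 := by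
    apply const_of_deriv_zero
    intro s
    have := ((hx s 1).sub ((hp s 0).const_mul θ))
    simpa [heq2 s, Pi.sub_def] using this
  have hP1 : ∀ s, p s 0 - κ * x s 1 = p 0 0 - κ * x 0 1 := by
    apply const_of_deriv_zero
    intro s
    have := ((hp s 0).sub ((hx s 1).const_mul κ))
    simpa [heq3 s, Pi.sub_def] using this
  have hP2 : ∀ s, p s 1 + κ * x s 0 = p 0 1 + κ * x 0 0 := by
    apply const_of_deriv_zero
    intro s
    have := ((hp s 1).add ((hx s 0).const_mul κ))
    simpa [heq4 s, Pi.add_def] using this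
  have hdx : ∀ s i, (1 - θ * κ) * dx s i = 0 := by
    intro s i
    fin_cases i
    · show (1 - θ * κ) * dx s 0 = 0
      linear_combination heq1 s - θ * heq4 s
    · show (1 - θ * κ) * dx s 1 = 0
      linear_combination heq2 s + θ * heq3 s
  have hdp : ∀ s i, (1 - θ * κ) * dp s i = 0 := by
    intro s i
    fin_cases i
    · show (1 - θ * κ) * dp s 0 = 0
      linear_combination heq3 s + κ * heq2 s
    · show (1 - θ * κ) * dp s 1 = 0
      linear_combination heq4 s - κ * heq1 s
  refine ⟨hQ1, hQ2, hP1, hP2, hdx, hdp, fun hne => ?_⟩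
  have hm : (1 - θ * κ) ≠ 0 := by
    intro h; apply hne; linarith
  have hdx0 : ∀ s i, dx s i = 0 := fun s i =>
    (mul_eq_zero.mp (hdx s i)).resolve_left hm
  have hdp0 : ∀ s i, dp s i = 0 := fun s i =>
    (mul_eq_zero.mp (hdp s i)).resolve_left hm
  constructor
  · intro s
    funext i
    exact const_of_deriv_zero (fun t => x t i)
      (fun t => by simpa [hdx0 t i] using hx t i) s
  · intro s
    funext i
    exact const_of_deriv_zero (fun t => p t i)
      (fun t => by simpa [hdp0 t i] using hp t i) s
end

section
/- For the doubly-extended Carroll particle in a static electromagnetic field, the Hamilton equations x^i' = -θ/(1-θB*) ε^{ij} e E_j(x) and p_i' = e E_i(x)/(1-θB*) imply that the guiding center Q^i = x^i + θ ε^{ij} p_j is constant in Carroll time. -/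
/-- Doubly-extended Carroll particle in a static electromagnetic field: the
Hamilton equations `x^i' = -θ/(1-θB*) ε^{ij} e E_j(x)` and
`p_i' = e E_i(x)/(1-θB*)` imply that the guiding center
`Q^i = x^i + θ ε^{ij} p_j` is constant in Carroll time. -/
theorem guiding_center_fixed_in_em_field
    (θ Bstar e : ℝ) (hB : θ * Bstar ≠ 1)
    (E : (Fin 2 → ℝ) → (Fin 2 → ℝ))
    (x p : ℝ → (Fin 2 → ℝ))
    (hx0 : ∀ s, HasDerivAt (fun t => x t 0)
      (-(θ / (1 - θ * Bstar)) * (e * E (x s) 1)) s)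
    (hx1 : ∀ s, HasDerivAt (fun t => x t 1)
      (θ / (1 - θ * Bstar) * (e * E (x s) 0)) s)
    (hp0 : ∀ s, HasDerivAt (fun t => p t 0)
      (e * E (x s) 0 / (1 - θ * Bstar)) s)
    (hp1 : ∀ s, HasDerivAt (fun t => p t 1)
      (e * E (x s) 1 / (1 - θ * Bstar)) s) :
    (∀ s, HasDerivAt (fun t => x t 0 + θ * p t 1) 0 s) ∧
    (∀ s, HasDerivAt (fun t => x t 1 - θ * p t 0) 0 s) ∧
    (∀ s, x s 0 + θ * p s 1 = x 0 0 + θ * p 0 1) ∧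
    (∀ s, x s 1 - θ * p s 0 = x 0 1 - θ * p 0 0) := by
  have h1 : ∀ s, HasDerivAt (fun t => x t 0 + θ * p t 1) 0 s := by
    intro s
    have := (hx0 s).add ((hp1 s).const_mul θ)
    convert this using 1
    · rfl
    · rfl
    · rfl
    · ring
  have h2 : ∀ s, HasDerivAt (fun t => x t 1 - θ * p t 0) 0 s := by
    intro s
    have := (hx1 s).sub ((hp0 s).const_mul θ)
    convert this using 1
    · rfl
    · rfl
    · rfl
    · ring
  have c1 : ∀ s, x s 0 + θ * p s 1 = x 0 0 + θ * p 0 1 := by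
    intro s
    have := is_const_of_deriv_eq_zero (f := fun t => x t 0 + θ * p t 1)
      (fun t => (h1 t).differentiableAt) (fun t => (h1 t).deriv) s 0
    simpa using this
  have c2 : ∀ s, x s 1 - θ * p s 0 = x 0 1 - θ * p 0 0 := by
    intro s
    have := is_const_of_deriv_eq_zero (f := fun t => x t 1 - θ * p t 0)
      (fun t => (h2 t).differentiableAt) (fun t => (h2 t).deriv) s 0
    simpa using this
  exact ⟨h1, h2, c1, c2⟩
end
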